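/- For every real μ > 1/2 and every z > 0, s_{μ,μ+4}(z) = z^{μ} ∫₀¹ (1−t²)^{μ−1/2} (1 − 4(μ+2) t² + (4/3)(μ+2)(μ+3) t⁴) sin(zt) dt. -/

import Mathlib

open Real

/-- The Lommel function `s_{μ,ν}(z)`, defined for `z > 0` by its convergent series. -/
noncomputable def lommelS (μ ν z : ℝ) : ℝ :=
  ∑' k : ℕ, (-1 : ℝ) ^ k * z ^ (μ + 2 * (k : ℝ) + 1) /
    ∏ j ∈ Finset.range (k + 1), ((μ + 2 * (j : ℝ) + 1) ^ 2 - ν ^ 2)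

/-!
Expanding `sin (z t)` in its Taylor series and integrating term by term (dominated convergence on
`[0, 1]`) turns the right-hand side into `z^μ ∑ (-1)^k z^(2k+1) / (2k+1)! · c_k`, where `c_k` is a
fixed combination of the moments `J_n = ∫₀¹ t^(2n+1) (1-t²)^p dt`, `p = μ - 1/2`.
Differentiating `t^m (1-t²)^(p+1)` gives the recurrence `(2p+2n+4) J_{n+1} = (2n+2) J_n`, hence the
Beta-integral closed form `J_n ∏_{j≤n} (2p+2j+2) = 2^n n!`. Since the Lommel denominator factors as
`∏_{j≤k} ((μ+2j+1)² - (μ+4)²) = ∏_{j≤k} (2j-3)(2μ+2j+5)`, the closed form makes `c_k` times that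
denominator equal to `(2k+1)!`, and the two series agree term by term.
-/

open MeasureTheory Finset
open scoped Nat

namespace Lommel

section OddMoment

variable {p : ℝ}

noncomputable def oddMoment (p : ℝ) (n : ℕ) : ℝ :=
  ∫ t in (0:ℝ)..1, t ^ (2 * n + 1) * (1 - t ^ 2) ^ p

lemma continuous_one_sub_sq_rpow (hp : 0 ≤ p) : Continuous fun t : ℝ => (1 - t ^ 2) ^ p :=
  continuous_iff_continuousAt.2 fun _ => ContinuousAt.rpow_const (by fun_prop) (Or.inr hp)

lemma intervalIntegrable_pow_mul_one_sub_sq_rpow (hp : 0 ≤ p) (m : ℕ) :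
    IntervalIntegrable (fun t : ℝ => t ^ m * (1 - t ^ 2) ^ p) volume 0 1 :=
  ((continuous_pow m).mul (continuous_one_sub_sq_rpow hp)).intervalIntegrable 0 1

lemma hasDerivAt_pow_mul_one_sub_sq_rpow_add_one (hp : 0 ≤ p) (m : ℕ) {t : ℝ}
    (ht : t ^ 2 ≤ 1) :
    HasDerivAt (fun t : ℝ => t ^ m * (1 - t ^ 2) ^ (p + 1))
      (m * (t ^ (m - 1) * (1 - t ^ 2) ^ p)
        - (m + 2 * p + 2) * (t ^ (m + 1) * (1 - t ^ 2) ^ p)) t := by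
  have hsq : HasDerivAt (fun t : ℝ => 1 - t ^ 2) (-(2 * t)) t := by
    simpa using (hasDerivAt_pow 2 t).const_sub 1
  refine ((hasDerivAt_pow m t).mul (hsq.rpow_const (Or.inr (by linarith)))).congr_deriv ?_
  rw [add_sub_cancel_right, Real.rpow_add' (by linarith) (by linarith), Real.rpow_one]
  rcases m with _ | m
  · simp only [pow_zero, CharP.cast_eq_zero]
    ring
  · simp only [Nat.add_sub_cancel, pow_succ]
    push_cast
    ring

lemma integral_pow_mul_one_sub_sq_rpow_recurrence (hp : 0 ≤ p) (m : ℕ) :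
    m * (∫ t in (0:ℝ)..1, t ^ (m - 1) * (1 - t ^ 2) ^ p)
      - (m + 2 * p + 2) * ∫ t in (0:ℝ)..1, t ^ (m + 1) * (1 - t ^ 2) ^ p = -0 ^ m := by
  have hI := intervalIntegrable_pow_mul_one_sub_sq_rpow hp
  have hFTC := intervalIntegral.integral_eq_sub_of_hasDerivAt
    (fun t ht => hasDerivAt_pow_mul_one_sub_sq_rpow_add_one hp m (t := t) (by
      rw [Set.uIcc_of_le zero_le_one] at ht
      nlinarith [ht.1, ht.2]))
    (((hI _).const_mul _).sub ((hI _).const_mul _))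
  rw [intervalIntegral.integral_sub ((hI _).const_mul _) ((hI _).const_mul _),
    intervalIntegral.integral_const_mul, intervalIntegral.integral_const_mul] at hFTC
  rw [hFTC]
  simp [Real.zero_rpow (show p + 1 ≠ 0 by linarith)]

lemma two_mul_add_two_mul_oddMoment_zero (hp : 0 ≤ p) : (2 * p + 2) * oddMoment p 0 = 1 := by
  have h := integral_pow_mul_one_sub_sq_rpow_recurrence hp 0
  simp only [oddMoment]
  norm_num at h ⊢
  linarith

lemma oddMoment_succ (hp : 0 ≤ p) (n : ℕ) :
    (2 * p + 2 * n + 4) * oddMoment p (n + 1) = (2 * n + 2) * oddMoment p n := by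
  have h := integral_pow_mul_one_sub_sq_rpow_recurrence hp (2 * n + 2)
  rw [show 2 * n + 2 - 1 = 2 * n + 1 by omega, show 2 * n + 2 + 1 = 2 * (n + 1) + 1 by ring]
    at h
  simp only [oddMoment]
  push_cast at h
  rw [zero_pow (by omega)] at h
  linear_combination -h

lemma oddMoment_mul_prod (hp : 0 ≤ p) (n : ℕ) :
    oddMoment p n * ∏ j ∈ range (n + 1), (2 * p + 2 * j + 2) = 2 ^ n * n ! := by
  induction n with
  | zero => simpa [mul_comm] using two_mul_add_two_mul_oddMoment_zero hp
  | succ n ih =>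
    rw [prod_range_succ, Nat.factorial_succ]
    push_cast
    linear_combination (∏ j ∈ range (n + 1), (2 * p + 2 * j + 2)) * oddMoment_succ hp n
      + 2 * (n + 1) * ih

lemma integral_pow_mul_one_sub_sq_rpow_mul_even_quartic (hp : 0 ≤ p) (a b c : ℝ) (n : ℕ) :
    ∫ t in (0:ℝ)..1, t ^ (2 * n + 1) * ((1 - t ^ 2) ^ p * (a - b * t ^ 2 + c * t ^ 4))
      = a * oddMoment p n - b * oddMoment p (n + 1) + c * oddMoment p (n + 2) := by
  have hI := intervalIntegrable_pow_mul_one_sub_sq_rpow hp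
  simp only [oddMoment]
  rw [← intervalIntegral.integral_const_mul, ← intervalIntegral.integral_const_mul,
    ← intervalIntegral.integral_const_mul, ← intervalIntegral.integral_sub
      ((hI _).const_mul a) ((hI _).const_mul b),
    ← intervalIntegral.integral_add (((hI _).const_mul a).sub ((hI _).const_mul b))
      ((hI _).const_mul c)]
  congr 1 with t
  ring

end OddMoment

lemma hasSum_integral_mul_sin {G : ℝ → ℝ} (hG : IntervalIntegrable G volume 0 1) (z : ℝ) :
    HasSum (fun n : ℕ => (-1) ^ n * z ^ (2 * n + 1) / (2 * n + 1)! *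
        ∫ t in (0:ℝ)..1, t ^ (2 * n + 1) * G t)
      (∫ t in (0:ℝ)..1, G t * Real.sin (z * t)) := by
  simp_rw [← intervalIntegral.integral_const_mul]
  refine intervalIntegral.hasSum_integral_of_dominated_convergence
    (fun n t => |z| ^ (2 * n + 1) / (2 * n + 1)! * ‖G t‖) (fun n => ?_) (fun n => ?_) ?_ ?_ ?_
  · exact ((continuous_pow _).aestronglyMeasurable.mul hG.def'.aestronglyMeasurable).const_mul _
  · refine ae_of_all _ fun t ht => ?_
    rw [Set.uIoc_of_le zero_le_one] at ht
    have ht_pow : |t| ^ (2 * n + 1) ≤ 1 :=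
      pow_le_one₀ (abs_nonneg t) (abs_le.2 ⟨by linarith [ht.1], ht.2⟩)
    simp only [norm_mul, norm_div, norm_pow, norm_neg, norm_one, one_pow, one_mul,
      Real.norm_eq_abs, Nat.abs_cast]
    exact mul_le_mul_of_nonneg_left (mul_le_of_le_one_left (abs_nonneg _) ht_pow)
      (by positivity)
  · exact ae_of_all _ fun t _ =>
      ((Real.summable_pow_div_factorial |z|).comp_injective
        (fun a b h => by simpa using h : Function.Injective fun n : ℕ => 2 * n + 1)).mul_right _
  · simp_rw [tsum_mul_right]
    exact hG.norm.const_mul _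
  · refine ae_of_all _ fun t _ => ?_
    refine ((Real.hasSum_sin (z * t)).mul_left (G t)).congr_fun fun n => ?_
    ring

lemma prod_two_mul_sub_three_mul_eq_factorial (k : ℕ) :
    (∏ j ∈ range (k + 1), (2 * (j : ℝ) - 3)) * ((2 * k - 1) * (2 * k + 1)) * 2 ^ k * k !
      = 3 * (2 * k + 1)! := by
  induction k with
  | zero => norm_num
  | succ k ih =>
    rw [prod_range_succ, show 2 * (k + 1) + 1 = (2 * k + 1) + 1 + 1 by ring,
      Nat.factorial_succ (2 * k + 1 + 1), Nat.factorial_succ (2 * k + 1), Nat.factorial_succ k]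
    push_cast at ih ⊢
    linear_combination (2 * (k : ℝ) + 3) * (2 * k + 2) * ih

lemma prod_sq_sub_add_four_sq_mul (μ : ℝ) (k : ℕ) :
    (∏ j ∈ range (k + 1), ((μ + 2 * (j : ℝ) + 1) ^ 2 - (μ + 4) ^ 2)) * ((2 * μ + 1) * (2 * μ + 3))
      = (∏ j ∈ range (k + 1), (2 * (j : ℝ) - 3)) * ∏ j ∈ range (k + 3), (2 * μ + 2 * j + 1) := by
  have hfactor (j : ℕ) : (μ + 2 * (j : ℝ) + 1) ^ 2 - (μ + 4) ^ 2
      = (2 * (j : ℝ) - 3) * (2 * μ + 2 * ((j + 1 + 1 : ℕ) : ℝ) + 1) := by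
    push_cast
    ring
  rw [prod_congr rfl fun j _ => hfactor j, prod_mul_distrib, prod_range_succ' _ (k + 2),
    prod_range_succ' _ (k + 1)]
  push_cast
  ring

lemma oddMoment_combination_mul_prod {μ : ℝ} (hμ : 1/2 ≤ μ) (k : ℕ) :
    (oddMoment (μ - 1/2) k - 4 * (μ + 2) * oddMoment (μ - 1/2) (k + 1)
        + 4/3 * (μ + 2) * (μ + 3) * oddMoment (μ - 1/2) (k + 2))
      * ∏ j ∈ range (k + 1), ((μ + 2 * (j : ℝ) + 1) ^ 2 - (μ + 4) ^ 2) = (2 * k + 1)! := by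
  have hJ (n : ℕ) :
      oddMoment (μ - 1/2) n * ∏ j ∈ range (n + 1), (2 * μ + 2 * j + 1) = 2 ^ n * n ! := by
    rw [← oddMoment_mul_prod (p := μ - 1/2) (by linarith) n]
    exact congrArg _ (prod_congr rfl fun j _ => by ring)
  set A := ∏ j ∈ range (k + 1), (2 * μ + 2 * (j : ℝ) + 1)
  have hA₂ : ∏ j ∈ range (k + 2), (2 * μ + 2 * (j : ℝ) + 1) = A * (2 * μ + 2 * k + 3) := by
    rw [prod_range_succ]
    push_cast
    ring
  have hA₃ : ∏ j ∈ range (k + 3), (2 * μ + 2 * (j : ℝ) + 1)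
      = A * (2 * μ + 2 * k + 3) * (2 * μ + 2 * k + 5) := by
    rw [prod_range_succ, hA₂]
    push_cast
    ring
  have hJ₀ := hJ k
  have hJ₁ := hJ (k + 1)
  have hJ₂ := hJ (k + 2)
  have hD := prod_sq_sub_add_four_sq_mul μ k
  rw [prod_range_succ, Nat.factorial_succ] at hJ₁
  rw [prod_range_succ, hA₂, Nat.factorial_succ, Nat.factorial_succ] at hJ₂
  rw [hA₃] at hD
  push_cast at hJ₁ hJ₂
  refine mul_right_cancel₀ (b := (2 * μ + 1) * (2 * μ + 3)) (by positivity) ?_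
  set O := ∏ j ∈ range (k + 1), (2 * (j : ℝ) - 3)
  -- The weights `1, 4(μ+2), 4/3 (μ+2)(μ+3)` are exactly those for which the combination of the
  -- closed forms collapses to `2^k k! (2μ+1)(2μ+3)(2k-1)(2k+1)/3`.
  linear_combination (oddMoment (μ - 1/2) k - 4 * (μ + 2) * oddMoment (μ - 1/2) (k + 1)
        + 4/3 * (μ + 2) * (μ + 3) * oddMoment (μ - 1/2) (k + 2)) * hD
    + O * (2 * μ + 2 * k + 3) * (2 * μ + 2 * k + 5) * hJ₀
    - 4 * (μ + 2) * O * (2 * μ + 2 * k + 5) * hJ₁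
    + 4/3 * (μ + 2) * (μ + 3) * O * hJ₂
    + (2 * μ + 1) * (2 * μ + 3) / 3 * prod_two_mul_sub_three_mul_eq_factorial k

lemma lommelS_term_eq {μ z : ℝ} (hμ : 1/2 ≤ μ) (hz : 0 < z) (k : ℕ) :
    (-1) ^ k * z ^ (μ + 2 * (k : ℝ) + 1) /
        ∏ j ∈ range (k + 1), ((μ + 2 * (j : ℝ) + 1) ^ 2 - (μ + 4) ^ 2)
      = z ^ μ * ((-1) ^ k * z ^ (2 * k + 1) / (2 * k + 1)! *
        (oddMoment (μ - 1/2) k - 4 * (μ + 2) * oddMoment (μ - 1/2) (k + 1)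
          + 4/3 * (μ + 2) * (μ + 3) * oddMoment (μ - 1/2) (k + 2))) := by
  have h := oddMoment_combination_mul_prod hμ k
  have hD := right_ne_zero_of_mul (h ▸ (Nat.cast_ne_zero.2 (Nat.factorial_ne_zero _)))
  rw [← eq_div_iff hD] at h
  rw [h, show μ + 2 * (k : ℝ) + 1 = μ + ((2 * k + 1 : ℕ) : ℝ) by push_cast; ring,
    Real.rpow_add hz, Real.rpow_natCast]
  field_simp

end Lommel

open Lommel

theorem stmt18 (μ : ℝ) (hμ : 1/2 < μ) (z : ℝ) (hz : 0 < z) :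
    lommelS μ (μ + 4) z = z ^ μ *
      ∫ t in (0:ℝ)..1,
        (1 - t ^ 2) ^ (μ - 1/2) *
          (1 - 4 * (μ + 2) * t ^ 2 + (4/3) * (μ + 2) * (μ + 3) * t ^ 4) * Real.sin (z * t) := by
  have hp : 0 ≤ μ - 1/2 := by linarith
  have hG : IntervalIntegrable (fun t : ℝ => (1 - t ^ 2) ^ (μ - 1/2) *
      (1 - 4 * (μ + 2) * t ^ 2 + (4/3) * (μ + 2) * (μ + 3) * t ^ 4)) volume 0 1 :=
    ((continuous_one_sub_sq_rpow hp).mul (by fun_prop)).intervalIntegrable 0 1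
  rw [lommelS, ← (hasSum_integral_mul_sin hG z).tsum_eq, ← tsum_mul_left]
  refine tsum_congr fun k => ?_
  rw [integral_pow_mul_one_sub_sq_rpow_mul_even_quartic hp, one_mul, lommelS_term_eq hμ.le hz]
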